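/- arXiv:1702.00610 — 6 statements merged into one kernel-verified Lean document; each statement's English description precedes it below -/
import Mathlib

section
/- Let t be a positive integer with 1 ≤ t ≤ k/2 and let e = e^ε > 1. If e < 3 then t(e−1)²/(t(e−1)+k)² ≤ 2(e−1)²/(k(e+1)²), and if e ≥ 3 then t(e−1)²/(t(e−1)+k)² ≤ (e−1)/(4k). -/
/-!
Write `a = e - 1` and `f(x) = x a² / (x a + k)²`. By AM-GM, `(x a + k)² ≥ 4 x a k`, so
`f(x) ≤ a / (4k)` for every `x ≥ 0`; this is the bound for `e ≥ 3`. Moreover `f` increases on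
`[0, k/a]`, the point where the two summands `x a` and `k` balance. When `e < 3` we have `a < 2`,
so `t ≤ k/2 ≤ k/a` and `f(t) ≤ f(k/2) = 2a² / (k(a + 2)²)`.
-/

noncomputable def tExpression (a k x : ℝ) : ℝ := x * a ^ 2 / (x * a + k) ^ 2

section

variable {a k : ℝ}

theorem tExpression_le_div_four (ha : 0 ≤ a) (hk : 0 < k) {x : ℝ} (hx : 0 ≤ x) :
    tExpression a k x ≤ a / (4 * k) := by
  have hxa : 0 ≤ x * a := mul_nonneg hx ha
  rw [tExpression, div_le_div_iff₀ (by positivity) (by positivity)]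
  have amgm : 4 * (x * a) * k ≤ (x * a + k) ^ 2 := four_mul_le_sq_add (x * a) k
  nlinarith [mul_le_mul_of_nonneg_left amgm ha]

theorem tExpression_le_of_le (ha : 0 ≤ a) (hk : 0 < k) {s x : ℝ} (hs : 0 ≤ s) (hsx : s ≤ x)
    (hxk : x * a ≤ k) : tExpression a k s ≤ tExpression a k x := by
  have hx : 0 ≤ x := hs.trans hsx
  rw [tExpression, tExpression, div_le_div_iff₀ (by positivity) (by positivity)]
  -- the difference of the cross products is `a² (x - s) (k² - s x a²)`
  have hsxa : s * x * a ^ 2 ≤ k ^ 2 := by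
    have : s * a ≤ k := (mul_le_mul_of_nonneg_right hsx ha).trans hxk
    nlinarith [mul_le_mul this hxk (mul_nonneg hx ha) hk.le]
  nlinarith [mul_nonneg (mul_nonneg (sq_nonneg a) (sub_nonneg.2 hsx)) (sub_nonneg.2 hsxa)]

theorem tExpression_half (hk : 0 < k) :
    tExpression a k (k / 2) = 2 * a ^ 2 / (k * (a + 2) ^ 2) := by
  rw [tExpression]
  field_simp

end

theorem t_expression_bound_general (ε : ℝ) (hε : 0 < ε) (k t : ℕ) (hk0 : 0 < k)
    (ht2 : 2 * t ≤ k) :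
    (Real.exp ε < 3 →
      (t : ℝ) * (Real.exp ε - 1) ^ 2 / ((t : ℝ) * (Real.exp ε - 1) + (k : ℝ)) ^ 2
        ≤ 2 * (Real.exp ε - 1) ^ 2 / ((k : ℝ) * (Real.exp ε + 1) ^ 2)) ∧
    (3 ≤ Real.exp ε →
      (t : ℝ) * (Real.exp ε - 1) ^ 2 / ((t : ℝ) * (Real.exp ε - 1) + (k : ℝ)) ^ 2
        ≤ (Real.exp ε - 1) / (4 * (k : ℝ))) := by
  have ha : 0 ≤ Real.exp ε - 1 := by linarith [Real.add_one_le_exp ε]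
  have hk : (0 : ℝ) < k := by exact_mod_cast hk0
  have ht : (0 : ℝ) ≤ t := t.cast_nonneg
  have ht2' : (t : ℝ) ≤ k / 2 := by
    rw [le_div_iff₀ two_pos]
    exact_mod_cast (mul_comm t 2).trans_le ht2
  refine ⟨fun h3 => ?_, fun _ => tExpression_le_div_four ha hk ht⟩
  have hbalance : k / 2 * (Real.exp ε - 1) ≤ k := by nlinarith
  calc tExpression (Real.exp ε - 1) k t
      ≤ tExpression (Real.exp ε - 1) k (k / 2) := tExpression_le_of_le ha hk ht ht2' hbalance
    _ = 2 * (Real.exp ε - 1) ^ 2 / (k * (Real.exp ε + 1) ^ 2) := by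
      rw [tExpression_half hk]
      ring

theorem t_expression_bound (ε : ℝ) (hε : 0 < ε) (k t : ℕ) (hk : Even k) (hk0 : 0 < k)
    (ht1 : 1 ≤ t) (ht2 : 2 * t ≤ k) :
    (Real.exp ε < 3 →
      (t : ℝ) * (Real.exp ε - 1) ^ 2 / ((t : ℝ) * (Real.exp ε - 1) + (k : ℝ)) ^ 2
        ≤ 2 * (Real.exp ε - 1) ^ 2 / ((k : ℝ) * (Real.exp ε + 1) ^ 2)) ∧
    (3 ≤ Real.exp ε →
      (t : ℝ) * (Real.exp ε - 1) ^ 2 / ((t : ℝ) * (Real.exp ε - 1) + (k : ℝ)) ^ 2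
        ≤ (Real.exp ε - 1) / (4 * (k : ℝ))) :=
  t_expression_bound_general ε hε k t hk0 ht2
end

section
/- Let k be even and Q : X → Y, with X = {1,…,k} and Y finite, be an ε-locally differentially private mechanism with the extremal property that Q(y|x)/min_{x'} Q(y|x') ∈ {1, e^ε} for all x, y. Then for every y ∈ Y, the sum over j = 1,…,k/2 of ((Q(y|j+k/2) − Q(y|j)) / Σ_{i=1}^k Q(y|i))² is at most 2(e^ε−1)²/(k(e^ε+1)²) when e^ε < 3, and at most (e^ε−1)/(4k) when e^ε ≥ 3. -/
/-!
Fix `y`, let `c` be the minimum of `Q (·) y` and write `a = exp ε`, so every `Q x y` is `c` or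
`a * c`. If `t` of the `m` pairs `(j, j + m)` take two different values, the numerator is
`t * ((a - 1) * c) ^ 2`, while the denominator is at least `(2 * m + t * (a - 1)) * c`. It remains
to bound `t * (a - 1) ^ 2 / (2 * m + t * (a - 1)) ^ 2` for `0 ≤ t ≤ m`: when `a < 3` it is
increasing in `t` on that range, so `t = m` is the worst case; in general AM-GM gives
`(2 * m + t * (a - 1)) ^ 2 ≥ 8 * m * t * (a - 1)`.
-/

open Finset

namespace TwoValued

variable {a c x y : ℝ}

theorem sq_sub_eq_ite (hx : x = c ∨ x = a * c) (hy : y = c ∨ y = a * c) :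
    (y - x) ^ 2 = if x ≠ y then ((a - 1) * c) ^ 2 else 0 := by
  by_cases hxy : x = y
  · simp [hxy]
  · rw [if_pos hxy]
    rcases hx with rfl | rfl <;> rcases hy with rfl | rfl <;> first | exact absurd rfl hxy | ring

theorem two_mul_add_ite_le_add (hx : x = c ∨ x = a * c) (hy : y = c ∨ y = a * c)
    (hcx : c ≤ x) (hcy : c ≤ y) :
    2 * c + (if x ≠ y then (a - 1) * c else 0) ≤ x + y := by
  by_cases hxy : x = y
  · simp only [hxy, ne_eq, not_true_eq_false, if_false]
    linarith
  · rw [if_pos hxy]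
    rcases hx with rfl | rfl <;> rcases hy with rfl | rfl <;>
      first | exact absurd rfl hxy | linarith

end TwoValued

section PairedSums

variable {ι : Type*} [Fintype ι] {a c : ℝ} {u v : ι → ℝ}

theorem sum_sq_sub_eq_card_mul (hu : ∀ i, u i = c ∨ u i = a * c)
    (hv : ∀ i, v i = c ∨ v i = a * c) :
    ∑ i, (v i - u i) ^ 2 = #{i | u i ≠ v i} * ((a - 1) * c) ^ 2 := by
  rw [sum_congr rfl fun i _ => TwoValued.sq_sub_eq_ite (hu i) (hv i), ← sum_filter, sum_const,
    nsmul_eq_mul]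

theorem mul_card_add_le_sum_add (hu : ∀ i, u i = c ∨ u i = a * c)
    (hv : ∀ i, v i = c ∨ v i = a * c) (hcu : ∀ i, c ≤ u i) (hcv : ∀ i, c ≤ v i) :
    c * (2 * Fintype.card ι + #{i | u i ≠ v i} * (a - 1)) ≤ ∑ i, (u i + v i) := by
  calc c * (2 * Fintype.card ι + #{i | u i ≠ v i} * (a - 1))
      = ∑ i, (2 * c + if u i ≠ v i then (a - 1) * c else 0) := by
        rw [sum_add_distrib, ← sum_filter, sum_const, sum_const, nsmul_eq_mul, nsmul_eq_mul,
          card_univ]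
        ring
    _ ≤ ∑ i, (u i + v i) :=
        sum_le_sum fun i _ => TwoValued.two_mul_add_ite_le_add (hu i) (hv i) (hcu i) (hcv i)

theorem sq_div_le_one_div_sq {S D : ℝ} (hc : 0 ≤ c) (hD : 0 < D) (hS : c * D ≤ S) :
    (c / S) ^ 2 ≤ 1 / D ^ 2 := by
  have hS0 : 0 ≤ S := (mul_nonneg hc hD.le).trans hS
  have hle : c / S ≤ 1 / D := by
    rcases hS0.eq_or_lt with hS0 | hS0
    · rw [← hS0, div_zero]
      positivity
    · rwa [div_le_div_iff₀ hS0 hD, one_mul]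
  simpa only [one_div, inv_pow] using pow_le_pow_left₀ (div_nonneg hc hS0) hle 2

theorem sum_sq_sub_div_sum_add_le [Nonempty ι] (ha : 0 < a) (hc : 0 ≤ c)
    (hu : ∀ i, u i = c ∨ u i = a * c) (hv : ∀ i, v i = c ∨ v i = a * c)
    (hcu : ∀ i, c ≤ u i) (hcv : ∀ i, c ≤ v i) :
    ∑ i, ((v i - u i) / ∑ j, (u j + v j)) ^ 2 ≤
      #{i | u i ≠ v i} * (a - 1) ^ 2 /
        (2 * Fintype.card ι + #{i | u i ≠ v i} * (a - 1)) ^ 2 := by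
  have htn : (#{i | u i ≠ v i} : ℝ) ≤ Fintype.card ι := by exact_mod_cast card_le_univ _
  set t : ℝ := (#{i | u i ≠ v i} : ℝ)
  set D : ℝ := 2 * Fintype.card ι + t * (a - 1)
  have hD : 0 < D := by
    have hn : (0 : ℝ) < Fintype.card ι := by exact_mod_cast Fintype.card_pos
    have ht : 0 ≤ t := by positivity
    nlinarith
  calc ∑ i, ((v i - u i) / ∑ j, (u j + v j)) ^ 2
      = t * (a - 1) ^ 2 * (c / ∑ j, (u j + v j)) ^ 2 := by
        simp only [div_pow, ← sum_div, sum_sq_sub_eq_card_mul hu hv]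
        ring
    _ ≤ t * (a - 1) ^ 2 * (1 / D ^ 2) := by
        gcongr
        exact sq_div_le_one_div_sq hc hD (mul_card_add_le_sum_add hu hv hcu hcv)
    _ = t * (a - 1) ^ 2 / D ^ 2 := by ring

end PairedSums

section PairCountBounds

variable {n t a : ℝ}

theorem mul_sq_div_sq_le_of_lt_three (hn : 0 < n) (ht : 0 ≤ t) (htn : t ≤ n) (ha0 : 0 < a)
    (ha3 : a < 3) :
    t * (a - 1) ^ 2 / (2 * n + t * (a - 1)) ^ 2 ≤ 2 * (a - 1) ^ 2 / ((n + n) * (a + 1) ^ 2) := by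
  have hD : 0 < 2 * n + t * (a - 1) := by nlinarith
  rw [div_le_div_iff₀ (by positivity) (by positivity)]
  have key : t * n * (a + 1) ^ 2 ≤ (2 * n + t * (a - 1)) ^ 2 := by
    have h : 0 ≤ (n - t) * (4 * n - t * (a - 1) ^ 2) := by
      apply mul_nonneg (by linarith)
      have h4 : (a - 1) ^ 2 ≤ 4 := by nlinarith
      nlinarith [mul_le_mul_of_nonneg_left h4 ht]
    nlinarith
  nlinarith [mul_le_mul_of_nonneg_left key (sq_nonneg (a - 1))]

theorem mul_sq_div_sq_le_of_one_le (hn : 0 < n) (ht : 0 ≤ t) (ha : 1 ≤ a) :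
    t * (a - 1) ^ 2 / (2 * n + t * (a - 1)) ^ 2 ≤ (a - 1) / (4 * (n + n)) := by
  have hD : 0 < 2 * n + t * (a - 1) := by nlinarith
  rw [div_le_div_iff₀ (by positivity) (by positivity)]
  have amgm : 8 * n * (t * (a - 1)) ≤ (2 * n + t * (a - 1)) ^ 2 := by
    nlinarith [sq_nonneg (2 * n - t * (a - 1))]
  nlinarith [mul_le_mul_of_nonneg_left amgm (sub_nonneg.2 ha)]

end PairCountBounds

theorem extremal_mechanism_sum_bound (ε : ℝ) (m : ℕ) (hm : 0 < m)
    (Y : Type) [Fintype Y]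
    (Q : Fin (m + m) → Y → ℝ)
    (hQ0 : ∀ x y, 0 ≤ Q x y)
    (hext : ∀ x y,
      Q x y = (Finset.univ.inf' ⟨⟨0, by omega⟩, Finset.mem_univ _⟩ fun x' => Q x' y) ∨
      Q x y = Real.exp ε *
        (Finset.univ.inf' ⟨⟨0, by omega⟩, Finset.mem_univ _⟩ fun x' => Q x' y)) :
    ∀ y : Y,
      (Real.exp ε < 3 →
        ∑ j : Fin m, ((Q (Fin.natAdd m j) y - Q (Fin.castAdd m j) y) / ∑ i, Q i y) ^ 2
          ≤ 2 * (Real.exp ε - 1) ^ 2 / (((m + m : ℕ) : ℝ) * (Real.exp ε + 1) ^ 2)) ∧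
      (3 ≤ Real.exp ε →
        ∑ j : Fin m, ((Q (Fin.natAdd m j) y - Q (Fin.castAdd m j) y) / ∑ i, Q i y) ^ 2
          ≤ (Real.exp ε - 1) / (4 * ((m + m : ℕ) : ℝ))) := by
  intro y
  have : Nonempty (Fin m) := ⟨⟨0, hm⟩⟩
  have hbound := sum_sq_sub_div_sum_add_le (u := fun j => Q (Fin.castAdd m j) y)
    (v := fun j => Q (Fin.natAdd m j) y) (Real.exp_pos ε) (le_inf' _ _ fun x _ => hQ0 x y)
    (fun _ => hext _ y) (fun _ => hext _ y) (fun _ => inf'_le _ (mem_univ _))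
    (fun _ => inf'_le _ (mem_univ _))
  have htm : (#{j | Q (Fin.castAdd m j) y ≠ Q (Fin.natAdd m j) y} : ℝ) ≤ m := by
    exact_mod_cast (card_le_univ _).trans_eq (Fintype.card_fin m)
  rw [Fin.sum_univ_add, ← sum_add_distrib]
  simp only [Fintype.card_fin] at hbound
  push_cast
  have hm' : (0 : ℝ) < m := by exact_mod_cast hm
  exact ⟨fun h3 => hbound.trans (mul_sq_div_sq_le_of_lt_three hm' (by positivity) htm
      (Real.exp_pos ε) h3),
    fun h3 => hbound.trans (mul_sq_div_sq_le_of_one_le hm' (by positivity) (by linarith))⟩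
end

section
/- Suppose k ≥ max(4, e+1) where e = e^ε > 1 and d = ⌈k/(e+1)⌉. Then the ℓ₂² risk bound holds: (1/n)·[(d(k−2)+1)e²/((k−d)(e−1)²) + 2(k−2)e/(e−1)² + ((k−2)(k−d)+1)/(d(e−1)²) − Σ p_i²] < (4k e/(n(e−1)²))·(1 + (2e+3)/(4k)) for every probability vector p. -/
/-!
Multiplying by `n (e-1)²` and dropping `-∑ pᵢ² ≤ 0`, it suffices to bound the three terms of the
bracket by `4ke + 2e² + 3e = 4ke (1 + (2e+3)/(4k))`. Write `t = k - d`; since `d = ⌈k/(e+1)⌉`, we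
have `t ≤ d e < t + e + 1`. Using `d e < t + e + 1` in the first term and `t ≤ d e` in the third,
each is at most `(k-2) e` plus a remainder: the first remainder is
`((k-1)e² + (k-2)e)/t ≤ 2e² + 10e` because `t` is of order `k e/(e+1)`, and the third is
`1/d ≤ 1 < e`.
-/

lemma le_natCeil_div_mul {x a : ℝ} (ha : 0 < a) : x ≤ ⌈x / a⌉₊ * a :=
  (div_le_iff₀ ha).mp (Nat.le_ceil _)

lemma natCeil_div_mul_lt {x a : ℝ} (hx : 0 ≤ x) (ha : 0 < a) : ⌈x / a⌉₊ * a < x + a := by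
  have h := mul_lt_mul_of_pos_right (Nat.ceil_lt_add_one (div_nonneg hx ha.le)) ha
  rwa [add_mul, div_mul_cancel₀ _ ha.ne', one_mul] at h

section BlockBounds

variable {e k D : ℝ}

lemma first_term_le (he : 0 ≤ e) (hk : 2 ≤ k) (ht : 0 < k - D) (hup : D * (e + 1) < k + e + 1) :
    (D * (k - 2) + 1) * e ^ 2 / (k - D)
      ≤ (k - 2) * e + ((k - 1) * e ^ 2 + (k - 2) * e) / (k - D) := by
  rw [← sub_le_iff_le_add, ← sub_div, div_le_iff₀ ht]
  nlinarith [mul_nonneg (mul_nonneg (sub_nonneg.mpr hk) he) (sub_nonneg.mpr hup.le)]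

lemma third_term_le (hk : 2 ≤ k) (hD : 1 ≤ D) (hlow : k ≤ D * (e + 1)) :
    ((k - 2) * (k - D) + 1) / D ≤ (k - 2) * e + 1 := by
  rw [div_le_iff₀ (by linarith)]
  nlinarith [mul_le_mul_of_nonneg_left (show k - D ≤ D * e by linarith) (sub_nonneg.mpr hk)]

lemma remainder_le (he : 1 < e) (hk : 3 ≤ k) (hup : D * (e + 1) < k + e + 1) :
    ((k - 1) * e ^ 2 + (k - 2) * e) / (k - D) ≤ 2 * e ^ 2 + 10 * e := by
  -- `(k - D)(e + 1) > k e - e - 1`, and `(k-1)e² + (8k-9)e - k - 8 ≥ 0` closes the gap.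
  have ht : 0 < (k - D) * (e + 1) := by nlinarith
  have ht' : 0 < k - D := pos_of_mul_pos_left ht (by linarith)
  have hpoly : 0 ≤ (k - 1) * e ^ 2 + (8 * k - 9) * e - k - 8 := by nlinarith
  rw [div_le_iff₀ ht']
  refine le_of_mul_le_mul_right ?_ (show 0 < e + 1 by linarith)
  nlinarith [mul_le_mul_of_nonneg_left (show k * e - e - 1 ≤ (k - D) * (e + 1) by linarith)
    (show 0 ≤ (2 * e + 10) * e by positivity), mul_nonneg (show 0 ≤ e by linarith) hpoly]

lemma block_terms_lt (he : 1 < e) (hk : 3 ≤ k) (hD : 1 ≤ D) (hlow : k ≤ D * (e + 1))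
    (hup : D * (e + 1) < k + e + 1) :
    (D * (k - 2) + 1) * e ^ 2 / (k - D) + 2 * (k - 2) * e + ((k - 2) * (k - D) + 1) / D
      < 4 * k * e + 2 * e ^ 2 + 3 * e := by
  have ht : 0 < k - D := by nlinarith
  linarith [first_term_le (by linarith) (by linarith) ht hup, third_term_le (by linarith) hD hlow,
    remainder_le he hk hup]

end BlockBounds

theorem l2_risk_upper_bound_general (e : ℝ) (he : 1 < e) (k n : ℕ)
    (hk4 : 4 ≤ k) (hn : 1 ≤ n)
    (p : Fin k → ℝ) :
    let d : ℕ := ⌈(k : ℝ) / (e + 1)⌉₊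
    (1 / (n : ℝ)) *
      (((d : ℝ) * ((k : ℝ) - 2) + 1) * e ^ 2 / (((k : ℝ) - d) * (e - 1) ^ 2)
        + 2 * ((k : ℝ) - 2) * e / (e - 1) ^ 2
        + (((k : ℝ) - 2) * ((k : ℝ) - d) + 1) / ((d : ℝ) * (e - 1) ^ 2)
        - ∑ i, (p i) ^ 2)
      < (4 * (k : ℝ) * e / ((n : ℝ) * (e - 1) ^ 2)) * (1 + (2 * e + 3) / (4 * (k : ℝ))) := by
  intro d
  have hk : (4 : ℝ) ≤ k := by exact_mod_cast hk4
  have hn' : (0 : ℝ) < n := by exact_mod_cast hn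
  have he1 : (0 : ℝ) < e + 1 := by linarith
  have hd : (1 : ℝ) ≤ d := by exact_mod_cast Nat.one_le_ceil_iff.mpr (by positivity)
  have key := block_terms_lt he (by linarith) hd (le_natCeil_div_mul he1)
    (by simpa only [add_assoc] using natCeil_div_mul_lt (Nat.cast_nonneg k) he1)
  have hsplit : ((d : ℝ) * ((k : ℝ) - 2) + 1) * e ^ 2 / (((k : ℝ) - d) * (e - 1) ^ 2)
        + 2 * ((k : ℝ) - 2) * e / (e - 1) ^ 2
        + (((k : ℝ) - 2) * ((k : ℝ) - d) + 1) / ((d : ℝ) * (e - 1) ^ 2)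
      = ((d * (k - 2) + 1) * e ^ 2 / (k - d) + 2 * (k - 2) * e + ((k - 2) * (k - d) + 1) / d)
          / (e - 1) ^ 2 := by
    rw [div_mul_eq_div_div, div_mul_eq_div_div]
    ring
  have hrhs : (4 * (k : ℝ) * e / ((n : ℝ) * (e - 1) ^ 2)) * (1 + (2 * e + 3) / (4 * (k : ℝ)))
      = 1 / n * ((4 * k * e + 2 * e ^ 2 + 3 * e) / (e - 1) ^ 2) := by
    field_simp
    ring
  rw [hsplit, hrhs]
  refine mul_lt_mul_of_pos_left ?_ (by positivity)
  have hsq : 0 ≤ ∑ i, p i ^ 2 := Finset.sum_nonneg fun i _ => sq_nonneg (p i)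
  have hlt := div_lt_div_of_pos_right key (by nlinarith : (0 : ℝ) < (e - 1) ^ 2)
  linarith

theorem l2_risk_upper_bound (e : ℝ) (he : 1 < e) (k n : ℕ)
    (hk4 : 4 ≤ k) (hke : e + 1 ≤ (k : ℝ)) (hn : 1 ≤ n)
    (p : Fin k → ℝ) (hp0 : ∀ i, 0 ≤ p i) (hp1 : ∑ i, p i = 1) :
    let d : ℕ := ⌈(k : ℝ) / (e + 1)⌉₊
    (1 / (n : ℝ)) *
      (((d : ℝ) * ((k : ℝ) - 2) + 1) * e ^ 2 / (((k : ℝ) - d) * (e - 1) ^ 2)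
        + 2 * ((k : ℝ) - 2) * e / (e - 1) ^ 2
        + (((k : ℝ) - 2) * ((k : ℝ) - d) + 1) / ((d : ℝ) * (e - 1) ^ 2)
        - ∑ i, (p i) ^ 2)
      < (4 * (k : ℝ) * e / ((n : ℝ) * (e - 1) ^ 2)) * (1 + (2 * e + 3) / (4 * (k : ℝ))) :=
  l2_risk_upper_bound_general e he k n hk4 hn p
end

section
/- For e > 1, k ≥ 2, 1 ≤ d ≤ k−1, and any probability vector p on k points, the expression (1/(e−1))·Σ_{i=1}^k √(((e−1)p_i + (d−1)e/(k−d) + 1)·((e−1)(1−p_i) + (k−1)/d)) is maximized over p by the uniform distribution p_i = 1/k, with maximum value (1/(e−1))·√((k−1)·(e−1 + k(d−1)e/(k−d) + k)·(e + (k−d)/d)). -/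
/-!
Both factors under each square root are affine in `p i`, so over the probability simplex their sums
over `i` do not depend on `p`. Cauchy–Schwarz bounds `∑ √(aᵢ bᵢ)` by `√((∑ aᵢ)(∑ bᵢ))`, a constant,
and the bound is attained when `a` and `b` are constant, i.e. at the uniform distribution.
-/

open Finset

namespace Real

variable {ι : Type*}

theorem sum_sqrt_mul_le_sqrt_mul_sum (s : Finset ι) {f g : ι → ℝ}
    (hf : ∀ i ∈ s, 0 ≤ f i) (hg : ∀ i ∈ s, 0 ≤ g i) :
    ∑ i ∈ s, √(f i * g i) ≤ √((∑ i ∈ s, f i) * ∑ i ∈ s, g i) :=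
  le_sqrt_of_sq_le <| sum_sq_le_sum_mul_sum_of_sq_le_mul s hf hg fun i hi =>
    (sq_sqrt (mul_nonneg (hf i hi) (hg i hi))).le

theorem sum_const_sqrt_mul (s : Finset ι) (a b : ℝ) :
    ∑ _i ∈ s, √(a * b) = √((∑ _i ∈ s, a) * ∑ _i ∈ s, b) := by
  simp only [sum_const, nsmul_eq_mul]
  rw [show (#s : ℝ) * a * (#s * b) = (#s : ℝ) ^ 2 * (a * b) by ring,
    sqrt_mul (sq_nonneg _), sqrt_sq (Nat.cast_nonneg _)]

end Real

theorem l1_risk_maximized_at_uniform_general (e : ℝ) (he : 1 < e) (k d : ℕ)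
    (hd1 : 1 ≤ d) (hd : d ≤ k - 1) :
    let F : (Fin k → ℝ) → ℝ := fun p => (1 / (e - 1)) *
      ∑ i, Real.sqrt (((e - 1) * p i + ((d : ℝ) - 1) * e / ((k : ℝ) - d) + 1)
        * ((e - 1) * (1 - p i) + ((k : ℝ) - 1) / d))
    let M : ℝ := (1 / (e - 1)) *
      Real.sqrt (((k : ℝ) - 1)
        * (e - 1 + (k : ℝ) * ((d : ℝ) - 1) * e / ((k : ℝ) - d) + (k : ℝ))
        * (e + ((k : ℝ) - d) / d))
    (∀ p : Fin k → ℝ, (∀ i, 0 ≤ p i) → (∑ i, p i = 1) → F p ≤ M) ∧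
    F (fun _ => 1 / (k : ℝ)) = M := by
  intro F M
  have he1 : 0 < e - 1 := sub_pos.2 he
  have hd_one : (1 : ℝ) ≤ d := by exact_mod_cast hd1
  have hdk : (d : ℝ) < k := by exact_mod_cast (by omega : d < k)
  have hk0 : (0 : ℝ) < k := by linarith
  have hβ : 0 ≤ ((d : ℝ) - 1) * e / ((k : ℝ) - d) :=
    div_nonneg (mul_nonneg (by linarith) (by linarith)) (by linarith)
  have hγ : 0 ≤ ((k : ℝ) - 1) / d := div_nonneg (by linarith) (by linarith)
  have hM_eq_sqrt_sums : ∀ p : Fin k → ℝ, ∑ i, p i = 1 → M = (1 / (e - 1)) *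
      √((∑ i, ((e - 1) * p i + ((d : ℝ) - 1) * e / ((k : ℝ) - d) + 1))
        * ∑ i, ((e - 1) * (1 - p i) + ((k : ℝ) - 1) / d)) := by
    intro p hp
    simp only [M, sum_add_distrib, sum_sub_distrib, ← mul_sum, hp, sum_const, card_univ,
      Fintype.card_fin, nsmul_eq_mul]
    congr 2
    field_simp
    ring
  refine ⟨fun p hp hsum => ?_, ?_⟩
  · have hp1 : ∀ i, p i ≤ 1 := fun i =>
      hsum ▸ single_le_sum (fun j _ => hp j) (mem_univ i)
    rw [hM_eq_sqrt_sums p hsum]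
    refine mul_le_mul_of_nonneg_left
      (Real.sum_sqrt_mul_le_sqrt_mul_sum _ (fun i _ => ?_) (fun i _ => ?_)) (by positivity)
    · nlinarith [hp i]
    · nlinarith [hp1 i]
  · have huniform : ∑ _i : Fin k, 1 / (k : ℝ) = 1 := by
      rw [sum_const, card_univ, Fintype.card_fin, nsmul_eq_mul, mul_one_div_cancel hk0.ne']
    rw [hM_eq_sqrt_sums _ huniform]
    exact congrArg _ (Real.sum_const_sqrt_mul _ _ _)

theorem l1_risk_maximized_at_uniform (e : ℝ) (he : 1 < e) (k d : ℕ) (hk : 2 ≤ k)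
    (hd1 : 1 ≤ d) (hd : d ≤ k - 1) :
    let F : (Fin k → ℝ) → ℝ := fun p => (1 / (e - 1)) *
      ∑ i, Real.sqrt (((e - 1) * p i + ((d : ℝ) - 1) * e / ((k : ℝ) - d) + 1)
        * ((e - 1) * (1 - p i) + ((k : ℝ) - 1) / d))
    let M : ℝ := (1 / (e - 1)) *
      Real.sqrt (((k : ℝ) - 1)
        * (e - 1 + (k : ℝ) * ((d : ℝ) - 1) * e / ((k : ℝ) - d) + (k : ℝ))
        * (e + ((k : ℝ) - d) / d))
    (∀ p : Fin k → ℝ, (∀ i, 0 ≤ p i) → (∑ i, p i = 1) → F p ≤ M) ∧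
    F (fun _ => 1 / (k : ℝ)) = M :=
  l1_risk_maximized_at_uniform_general e he k d hd1 hd
end

section
/- Let ε > 3.8 and k > 9e^ε. Then (2e^{ε/4}/(e^{ε/2}+1))·(1 + (e^ε+1)/(4k))·(1 − 1/k)^{-1/2} < 0.7 and 2√(e^ε/k)·(1 + (e^ε+1)/(4k))·(1 − 1/k)^{-1/2} < 0.7. -/
open Real

/- Put `x = e^{ε/4}`, so that `e^{ε/2} = x²` and `e^ε = x⁴`. From `x > e^{0.95} > 2.58` and the
decrease of `x ↦ 2x/(x² + 1)` on `[1, ∞)` the first factor is at most `0.674`; from `e^ε/k < 1/9` the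
factor `2√(e^ε/k)` is below `2/3`. The remaining correction factor is close to `1`: its first part
is `1 + e^ε/(4k) + 1/(4k) < 1 + 1/36 + 1/(4k)`, and `(1 - t)^{-1/2} ≤ 1 + t` for small `t`, with
`k > 9 · 44`. -/

lemma exp_nineteen_twentieths_gt : (2.58 : ℝ) < exp (19 / 20) := by
  have hsplit : exp (19 / 20) = exp 1 * exp (-(1 / 20)) := by
    rw [← exp_add]; norm_num
  have hsmall : (19 / 20 : ℝ) ≤ exp (-(1 / 20)) := by
    linarith [add_one_le_exp (-(1 / 20) : ℝ)]
  rw [hsplit]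
  nlinarith [exp_one_gt_d9, exp_pos (-(1 / 20) : ℝ)]

lemma two_mul_div_sq_add_one_le {a x : ℝ} (ha : 1 ≤ a) (hax : a ≤ x) :
    2 * x / (x ^ 2 + 1) ≤ 2 * a / (a ^ 2 + 1) := by
  rw [div_le_div_iff₀ (by positivity) (by positivity)]
  nlinarith [mul_nonneg (sub_nonneg.2 hax) (by nlinarith : 0 ≤ a * x - 1)]

lemma inv_sqrt_one_sub_le_one_add {t : ℝ} (ht₀ : 0 ≤ t) (ht₁ : t ≤ 1 / 2) :
    (√(1 - t))⁻¹ ≤ 1 + t := by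
  have hsqrt : 1 ≤ (1 + t) * √(1 - t) := by
    rw [← sqrt_sq (by positivity : 0 ≤ 1 + t), ← sqrt_mul (by positivity)]
    exact one_le_sqrt.2 (by nlinarith [mul_nonneg ht₀ (by nlinarith : 0 ≤ 1 - t - t ^ 2)])
  rw [inv_le_iff_one_le_mul₀ (sqrt_pos.2 (by linarith))]
  linarith

lemma correction_factor_lt {E k : ℝ} (hE : 44 ≤ E) (hk : 9 * E < k) :
    (1 + (E + 1) / (4 * k)) * (√(1 - 1 / k))⁻¹ < 1.032 := by
  have hk396 : 396 < k := by linarith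
  have hk₀ : 0 < k := by linarith
  have hfirst : 1 + (E + 1) / (4 * k) ≤ 1 + 1 / 36 + 1 / (4 * 396) := by
    have hEk : E / (4 * k) ≤ 1 / 36 := by
      rw [div_le_div_iff₀ (by positivity) (by norm_num)]; linarith
    have hk_inv : 1 / (4 * k) ≤ 1 / (4 * 396) := by gcongr
    rw [add_div]; linarith
  have hinv : 1 / k ≤ 1 / 396 := by gcongr
  have hsecond : (√(1 - 1 / k))⁻¹ ≤ 1 + 1 / 396 :=
    (inv_sqrt_one_sub_le_one_add (by positivity) (by linarith)).trans (by linarith)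
  calc (1 + (E + 1) / (4 * k)) * (√(1 - 1 / k))⁻¹
      ≤ (1 + 1 / 36 + 1 / (4 * 396)) * (1 + 1 / 396) :=
        mul_le_mul hfirst hsecond (by positivity) (by norm_num)
    _ < 1.032 := by norm_num

theorem l1_improvement_factors (ε : ℝ) (hε : 3.8 < ε) (k : ℕ)
    (hk : 9 * Real.exp ε < (k : ℝ)) :
    2 * Real.exp (ε / 4) / (Real.exp (ε / 2) + 1)
        * (1 + (Real.exp ε + 1) / (4 * (k : ℝ)))
        * (Real.sqrt (1 - 1 / (k : ℝ)))⁻¹ < 0.7 ∧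
    2 * Real.sqrt (Real.exp ε / (k : ℝ))
        * (1 + (Real.exp ε + 1) / (4 * (k : ℝ)))
        * (Real.sqrt (1 - 1 / (k : ℝ)))⁻¹ < 0.7 := by
  set x := exp (ε / 4) with hx_def
  have hx : 2.58 < x := exp_nineteen_twentieths_gt.trans (exp_lt_exp.2 (by linarith))
  have hhalf : exp (ε / 2) = x ^ 2 := by rw [hx_def, ← exp_nat_mul]; ring_nf
  have hfull : exp ε = x ^ 4 := by rw [hx_def, ← exp_nat_mul]; ring_nf
  have hE : 44 ≤ exp ε := by rw [hfull]; nlinarith [pow_le_pow_left₀ (by norm_num) hx.le 4]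
  have hM := correction_factor_lt hE hk
  have hk₀ : (0 : ℝ) < k := by linarith [exp_pos ε]
  refine ⟨?_, ?_⟩
  · have hA : 2 * x / (exp (ε / 2) + 1) ≤ 0.674 := by
      rw [hhalf]
      exact (two_mul_div_sq_add_one_le (by norm_num) hx.le).trans (by norm_num)
    calc _ = 2 * x / (exp (ε / 2) + 1) * ((1 + (exp ε + 1) / (4 * k)) * (√(1 - 1 / k))⁻¹) :=
          mul_assoc _ _ _
      _ ≤ 0.674 * 1.032 := mul_le_mul hA hM.le (by positivity) (by norm_num)
      _ < 0.7 := by norm_num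
  · have hS : 2 * √(exp ε / k) < 2 / 3 := by
      have : √(exp ε / k) < 1 / 3 := by
        rw [sqrt_lt' (by norm_num), div_lt_iff₀ hk₀]; linarith
      linarith
    calc _ = 2 * √(exp ε / k) * ((1 + (exp ε + 1) / (4 * k)) * (√(1 - 1 / k))⁻¹) :=
          mul_assoc _ _ _
      _ ≤ 2 / 3 * 1.032 := mul_le_mul hS.le hM.le (by positivity) (by norm_num)
      _ < 0.7 := by norm_num
end

section
/- Let Q : X → Y be an ε-locally differentially private mechanism with finite output alphabet Y, where X = {1,…,k}. For each y ∈ Y let Q_y = min_{x ∈ X} Q(y|x). Then the vector (Q(y|1)/Q_y, …, Q(y|k)/Q_y) lies in [1, e^ε]^k, and hence can be written as Σ_i w_{y,i} b_i where {b_i} are the 2^k vertices of {1, e^ε}^k and w_{y,i} ≥ 0 sum to 1; consequently there exists an ε-locally differentially private mechanism Q_E : X → Y_E with finite alphabet Y_E of size 2^k·|Y| such that Q_E(ȳ|x)/min_{x'} Q_E(ȳ|x') ∈ {1, e^ε} for all x, ȳ with Q_E(ȳ|x) > 0, and a deterministic map f : Y_E → Y with Q(y|x) = Σ_{ȳ ∈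 f^{-1}(y)} Q_E(ȳ|x) for all x, y. -/
/-!
If `Q(y|x) ≤ e^ε Q(y|x')` for all `x, x'`, the likelihood vector of each output `y`, scaled by its
minimum `Q_y`, lies in the cube `[1, e^ε]^k`. Picking the `i`-th coordinate of a vertex of
`{1, e^ε}^k` to be `e^ε` independently with probability `tᵢ = (vᵢ - 1) / (e^ε - 1)` writes the
vector as a convex combination `∑_s w_s s` of the vertices. Splitting `y` into the outputs
`(s, y)` with `Q_E((s, y)|x) = Q_y w_s s(x)` gives a mechanism whose likelihood vectors are
multiples of vertices, hence extremal, and forgetting `s` recovers `Q`.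
-/

open Finset

section VertexWeights

variable {ι : Type*} [Fintype ι]

def bernoulliWeight (t : ι → ℝ) (s : ι → Bool) : ℝ :=
  ∏ i, if s i then t i else 1 - t i

lemma bernoulliWeight_nonneg {t : ι → ℝ} (ht : ∀ i, t i ∈ Set.Icc 0 1) (s : ι → Bool) :
    0 ≤ bernoulliWeight t s :=
  prod_nonneg fun i _ => by
    split_ifs
    · exact (ht i).1
    · linarith [(ht i).2]

variable {a b : ℝ} {v : ι → ℝ}

/-- `s : ι → Bool` stands for the vertex of `{a, b}^ι` with coordinate `b` where `s i = true`. -/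
noncomputable def vertexWeight (a b : ℝ) (v : ι → ℝ) : (ι → Bool) → ℝ :=
  bernoulliWeight fun i => (v i - a) / (b - a)

lemma vertexWeight_nonneg (hv : ∀ i, v i ∈ Set.Icc a b) (s : ι → Bool) :
    0 ≤ vertexWeight a b v s :=
  bernoulliWeight_nonneg (fun i =>
    have ⟨hav, hvb⟩ := hv i
    ⟨div_nonneg (by linarith) (by linarith), div_le_one_of_le₀ (by linarith) (by linarith)⟩) s

variable [DecidableEq ι]

lemma sum_bernoulliWeight (t : ι → ℝ) : ∑ s, bernoulliWeight t s = 1 :=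
  calc ∑ s, bernoulliWeight t s = ∏ i, ∑ b : Bool, if b then t i else 1 - t i :=
        (Fintype.prod_sum fun i (b : Bool) => if b then t i else 1 - t i).symm
    _ = 1 := by simp

lemma sum_bernoulliWeight_mul_apply (t : ι → ℝ) (g : Bool → ℝ) (i : ι) :
    ∑ s, bernoulliWeight t s * g (s i) = (1 - t i) * g false + t i * g true := by
  let F : ι → Bool → ℝ := fun j b => (if b then t j else 1 - t j) * if j = i then g b else 1
  have hterm : ∀ s : ι → Bool, bernoulliWeight t s * g (s i) = ∏ j, F j (s j) := by
    intro s
    simp only [F, prod_mul_distrib, prod_ite_eq', mem_univ, if_true, bernoulliWeight]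
  have hfactor : ∀ j, ∑ b, F j b = if j = i then (1 - t i) * g false + t i * g true else 1 := by
    intro j
    by_cases hj : j = i
    · subst hj; simp [F, add_comm]
    · simp [F, hj]
  simp only [hterm, ← Fintype.prod_sum, hfactor, prod_ite_eq', mem_univ, if_true]

lemma sum_vertexWeight_mul_vertex (hv : ∀ i, v i ∈ Set.Icc a b) (i : ι) :
    ∑ s, vertexWeight a b v s * (if s i then b else a) = v i := by
  rw [vertexWeight, sum_bernoulliWeight_mul_apply _ (fun c => if c then b else a)]
  simp only [Bool.false_eq_true, ↓reduceIte]
  obtain ⟨hav, hvb⟩ := hv i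
  rcases (hav.trans hvb).eq_or_lt with hab | hab
  · subst hab
    simp [le_antisymm hvb hav]
  · field_simp [sub_ne_zero.2 hab.ne']
    ring

end VertexWeights

lemma eq_inf'_or_eq_mul_inf'_of_forall_eq_or {X : Type*} {s : Finset X} (hs : s.Nonempty)
    {g : X → ℝ} {A c : ℝ} (hA : 0 ≤ A) (hc : 1 ≤ c) (hg : ∀ x ∈ s, g x = A ∨ g x = c * A)
    {x : X} (hx : x ∈ s) : g x = s.inf' hs g ∨ g x = c * s.inf' hs g := by
  obtain ⟨x₀, hx₀, hinf⟩ := exists_mem_eq_inf' hs g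
  have hle : s.inf' hs g ≤ g x := inf'_le g hx
  rw [hinf] at hle ⊢
  rcases hg x hx with h | h <;> rcases hg x₀ hx₀ with h₀ | h₀
  · exact .inl (h.trans h₀.symm)
  · left; nlinarith
  · exact .inr (h.trans (congrArg (c * ·) h₀.symm))
  · exact .inl (h.trans h₀.symm)

section Mechanism

variable {X Y : Type*} [Fintype X] [Nonempty X]

def minLikelihood (Q : X → Y → ℝ) (y : Y) : ℝ :=
  univ.inf' univ_nonempty fun x => Q x y

variable {Q : X → Y → ℝ} {c : ℝ}

lemma minLikelihood_le (x : X) (y : Y) : minLikelihood Q y ≤ Q x y :=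
  inf'_le _ (mem_univ x)

lemma minLikelihood_nonneg (hQ0 : ∀ x y, 0 ≤ Q x y) (y : Y) : 0 ≤ minLikelihood Q y :=
  le_inf' _ _ fun x _ => hQ0 x y

variable (hQ : ∀ x x' y, Q x y ≤ c * Q x' y)
include hQ

lemma le_mul_minLikelihood (x : X) (y : Y) : Q x y ≤ c * minLikelihood Q y := by
  obtain ⟨x', -, hx'⟩ := exists_mem_eq_inf' univ_nonempty fun x => Q x y
  rw [minLikelihood, hx']
  exact hQ x x' y

lemma eq_zero_of_minLikelihood_eq_zero (hQ0 : ∀ x y, 0 ≤ Q x y) {y : Y}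
    (hy : minLikelihood Q y = 0) (x : X) : Q x y = 0 :=
  le_antisymm (by simpa [hy] using le_mul_minLikelihood hQ x y) (hQ0 x y)

lemma minLikelihood_pos (hQ0 : ∀ x y, 0 ≤ Q x y) {x : X} {y : Y} (hxy : 0 < Q x y) :
    0 < minLikelihood Q y :=
  (minLikelihood_nonneg hQ0 y).lt_of_ne fun hy =>
    hxy.ne' (eq_zero_of_minLikelihood_eq_zero hQ hQ0 hy.symm x)

lemma div_minLikelihood_mem_Icc {y : Y} (hy : 0 < minLikelihood Q y) (x : X) :
    Q x y / minLikelihood Q y ∈ Set.Icc 1 c :=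
  ⟨(one_le_div hy).2 (minLikelihood_le x y), (div_le_iff₀ hy).2 (le_mul_minLikelihood hQ x y)⟩

noncomputable def extremalMechanism (Q : X → Y → ℝ) (c : ℝ) (x : X) (z : (X → Bool) × Y) : ℝ :=
  minLikelihood Q z.2 * vertexWeight 1 c (fun x' => Q x' z.2 / minLikelihood Q z.2) z.1 *
    if z.1 x then c else 1

variable (hQ0 : ∀ x y, 0 ≤ Q x y)
include hQ0

lemma minLikelihood_mul_vertexWeight_nonneg (y : Y) (s : X → Bool) :
    0 ≤ minLikelihood Q y * vertexWeight 1 c (fun x => Q x y / minLikelihood Q y) s := by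
  rcases (minLikelihood_nonneg hQ0 y).eq_or_lt with hy | hy
  · simp [← hy]
  · exact mul_nonneg hy.le (vertexWeight_nonneg (div_minLikelihood_mem_Icc hQ hy) s)

lemma sum_extremalMechanism_fiber [DecidableEq X] (x : X) (y : Y) :
    ∑ s, extremalMechanism Q c x (s, y) = Q x y := by
  rcases (minLikelihood_nonneg hQ0 y).eq_or_lt with hy | hy
  · simp [extremalMechanism, ← hy, eq_zero_of_minLikelihood_eq_zero hQ hQ0 hy.symm x]
  · simp only [extremalMechanism, mul_assoc, ← mul_sum,
      sum_vertexWeight_mul_vertex (div_minLikelihood_mem_Icc hQ hy)]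
    exact mul_div_cancel₀ _ hy.ne'

lemma sum_filter_snd_extremalMechanism [DecidableEq X] [Fintype Y] [DecidableEq Y]
    (x : X) (y : Y) :
    ∑ z ∈ univ.filter (fun z => z.2 = y), extremalMechanism Q c x z = Q x y := by
  rw [sum_filter, Fintype.sum_prod_type]
  simpa using sum_extremalMechanism_fiber hQ hQ0 x y

lemma sum_extremalMechanism [DecidableEq X] [Fintype Y] [DecidableEq Y]
    (hQ1 : ∀ x, ∑ y, Q x y = 1) (x : X) : ∑ z, extremalMechanism Q c x z = 1 := by
  rw [← sum_fiberwise univ Prod.snd]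
  simp only [sum_filter_snd_extremalMechanism hQ hQ0, hQ1]

variable (hc : 1 ≤ c)
include hc

lemma extremalMechanism_nonneg (x : X) (z : (X → Bool) × Y) :
    0 ≤ extremalMechanism Q c x z :=
  mul_nonneg (minLikelihood_mul_vertexWeight_nonneg hQ hQ0 z.2 z.1)
    (by split_ifs <;> linarith)

lemma extremalMechanism_le_mul (x x' : X) (z : (X → Bool) × Y) :
    extremalMechanism Q c x z ≤ c * extremalMechanism Q c x' z := by
  have hA := minLikelihood_mul_vertexWeight_nonneg hQ hQ0 z.2 z.1
  have hvertex : (if z.1 x then c else 1) ≤ c * if z.1 x' then c else 1 := by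
    split_ifs <;> nlinarith
  rw [extremalMechanism, extremalMechanism, mul_left_comm c]
  exact mul_le_mul_of_nonneg_left hvertex hA

lemma extremalMechanism_eq_inf'_or (x : X) (z : (X → Bool) × Y) :
    extremalMechanism Q c x z = univ.inf' univ_nonempty (extremalMechanism Q c · z) ∨
      extremalMechanism Q c x z = c * univ.inf' univ_nonempty (extremalMechanism Q c · z) :=
  eq_inf'_or_eq_mul_inf'_of_forall_eq_or (g := (extremalMechanism Q c · z)) univ_nonempty
    (minLikelihood_mul_vertexWeight_nonneg hQ hQ0 z.2 z.1) hc (fun x' _ => by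
      simp only [extremalMechanism]
      split_ifs
      · exact .inr (mul_comm _ _)
      · exact .inl (mul_one _))
    (mem_univ x)

end Mechanism

theorem reduction_to_extremal (ε : ℝ) (hε : 0 < ε) (k : ℕ) (hk : 0 < k)
    (Y : Type) [Fintype Y] [DecidableEq Y]
    (Q : Fin k → Y → ℝ)
    (hQ0 : ∀ x y, 0 ≤ Q x y) (hQ1 : ∀ x, ∑ y, Q x y = 1)
    (hpriv : ∀ x x' y, Q x y ≤ Real.exp ε * Q x' y) :
    let Qmin : Y → ℝ :=
      fun y => Finset.univ.inf' ⟨⟨0, hk⟩, Finset.mem_univ _⟩ (fun x => Q x y)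
    (∀ y x, 0 < Q x y → 1 ≤ Q x y / Qmin y ∧ Q x y / Qmin y ≤ Real.exp ε) ∧
    (∀ y, 0 < Qmin y → ∃ w : (Fin k → Bool) → ℝ,
      (∀ s, 0 ≤ w s) ∧ (∑ s : Fin k → Bool, w s = 1) ∧
      (∀ x, Q x y / Qmin y =
        ∑ s : Fin k → Bool, w s * (if s x then Real.exp ε else 1))) ∧
    (∃ (QE : Fin k → (Fin k → Bool) × Y → ℝ) (f : (Fin k → Bool) × Y → Y),
      (∀ x z, 0 ≤ QE x z) ∧ (∀ x, ∑ z, QE x z = 1) ∧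
      (∀ x x' z, QE x z ≤ Real.exp ε * QE x' z) ∧
      (∀ x z, 0 < QE x z →
        QE x z = (Finset.univ.inf' ⟨⟨0, hk⟩, Finset.mem_univ _⟩ fun x' => QE x' z) ∨
        QE x z = Real.exp ε *
          (Finset.univ.inf' ⟨⟨0, hk⟩, Finset.mem_univ _⟩ fun x' => QE x' z)) ∧
      (∀ x y, Q x y = ∑ z ∈ Finset.univ.filter (fun z => f z = y), QE x z)) := by
  intro Qmin
  have : Nonempty (Fin k) := ⟨⟨0, hk⟩⟩
  have hc : 1 ≤ Real.exp ε := Real.one_le_exp hε.le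
  have hbox {y} (hy : 0 < minLikelihood Q y) := div_minLikelihood_mem_Icc hpriv hy
  refine ⟨fun y x hxy => hbox (minLikelihood_pos hpriv hQ0 hxy) x,
    fun y hy => ⟨vertexWeight 1 (Real.exp ε) (fun x => Q x y / minLikelihood Q y),
      vertexWeight_nonneg (hbox hy), sum_bernoulliWeight _,
      fun x => (sum_vertexWeight_mul_vertex (hbox hy) x).symm⟩,
    extremalMechanism Q (Real.exp ε), Prod.snd, extremalMechanism_nonneg hpriv hQ0 hc,
    sum_extremalMechanism hpriv hQ0 hQ1, extremalMechanism_le_mul hpriv hQ0 hc,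
    fun x z _ => extremalMechanism_eq_inf'_or hpriv hQ0 hc x z,
    fun x y => (sum_filter_snd_extremalMechanism hpriv hQ0 x y).symm⟩
end
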